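/- Let V be a complex vector space equipped with two inner products ⟨·,·⟩₁ and ⟨·,·⟩₂, with induced norms ‖·‖₁ and ‖·‖₂. Then the following are equivalent: (1) there exists c > 0 such that ⟨x,y⟩₂ = c·⟨x,y⟩₁ for all x, y ∈ V; (2) there exists c > 0 such that ‖x‖₂ = c·‖x‖₁ for all x ∈ V; (3) for all nonzero x, y ∈ V, Re⟨x,y⟩₁/(‖x‖₁‖y‖₁) = Re⟨x,y⟩₂/(‖x‖₂‖y‖₂); (4) for all nonzero x, y ∈ V, Re⟨x,y⟩₁ = 0 if and only if Re⟨x,y⟩₂ = 0; (5) for all x, y ∈ V, ⟨x,y⟩₁ = 0 if and only if ⟨x,y⟩₂ = 0. -/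

import Mathlib

/-!
Preserving orthogonality forces conformality. For `x ≠ 0` the vector
`y - (⟨x, y⟩₁ / ⟨x, x⟩₁) • x` is `⟨·,·⟩₁`-orthogonal to `x`, hence `⟨·,·⟩₂`-orthogonal to it, so
`⟨x, y⟩₂ = r x * ⟨x, y⟩₁` with `r x = ‖x‖₂² / ‖x‖₁²`. Conjugate symmetry gives `r x = r y` whenever
`⟨x, y⟩₁ ≠ 0`, and if `⟨x, y⟩₁ = 0` both equal `r (x + y)`. The other implications rest on
polarization and on `Re ⟨x, I • y⟩ = -Im ⟨x, y⟩`, by which real parts determine the inner product.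
-/

open RCLike ComplexConjugate

namespace InnerProductSpace.Core

variable {𝕜 V : Type*} [RCLike 𝕜] [AddCommGroup V] [Module 𝕜 V]

section Single

variable (p : InnerProductSpace.Core 𝕜 V)

lemma re_inner_self_pos {x : V} (hx : x ≠ 0) : 0 < re (p.inner x x) := by
  refine (p.re_inner_nonneg x).lt_of_ne' fun h ↦ hx (p.definite x ?_)
  rw [← inner_self_ofReal_re (c := p.toCore), h, ofReal_zero]

lemma re_inner_smul_I_right (x y : V) : re (p.inner x ((I : 𝕜) • y)) = -im (p.inner x y) := by
  rw [inner_smul_right (c := p.toCore), I_mul_re]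

lemma inner_eq_zero_iff_re_inner_eq_zero (x y : V) :
    p.inner x y = 0 ↔ re (p.inner x y) = 0 ∧ re (p.inner x ((I : 𝕜) • y)) = 0 := by
  rw [re_inner_smul_I_right, neg_eq_zero, RCLike.ext_iff, map_zero, map_zero]

lemma re_inner_eq_polarization (x y : V) :
    re (p.inner x y) =
      (re (p.inner (x + y) (x + y)) - re (p.inner x x) - re (p.inner y y)) / 2 := by
  rw [inner_add_add_self (c := p.toCore), map_add, map_add, map_add,
    inner_re_symm (c := p.toCore) y x]
  ring

noncomputable def cosAngle (x y : V) : ℝ :=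
  re (p.inner x y) / (√(re (p.inner x x)) * √(re (p.inner y y)))

lemma cosAngle_eq_zero_iff {x y : V} (hx : x ≠ 0) (hy : y ≠ 0) :
    cosAngle p x y = 0 ↔ re (p.inner x y) = 0 := by
  have hxy : √(re (p.inner x x)) * √(re (p.inner y y)) ≠ 0 := mul_ne_zero
    (Real.sqrt_ne_zero'.2 (re_inner_self_pos p hx)) (Real.sqrt_ne_zero'.2 (re_inner_self_pos p hy))
  rw [cosAngle, div_eq_zero_iff, or_iff_left hxy]

end Single

section Pair

variable {p q : InnerProductSpace.Core 𝕜 V}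

lemma re_inner_eq_of_inner_eq {c : ℝ} (h : ∀ x y, q.inner x y = c * p.inner x y) (x y : V) :
    re (q.inner x y) = c * re (p.inner x y) := by
  rw [h, re_ofReal_mul]

lemma sqrt_re_inner_self_eq_of_inner_eq {c : ℝ} (h : ∀ x y, q.inner x y = c * p.inner x y)
    (hc : 0 ≤ c) (x : V) : √(re (q.inner x x)) = √c * √(re (p.inner x x)) := by
  rw [re_inner_eq_of_inner_eq h, Real.sqrt_mul hc]

lemma cosAngle_eq_of_inner_eq {c : ℝ} (h : ∀ x y, q.inner x y = c * p.inner x y) (hc : 0 < c)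
    (x y : V) : cosAngle q x y = cosAngle p x y := by
  rw [cosAngle, cosAngle, re_inner_eq_of_inner_eq h, sqrt_re_inner_self_eq_of_inner_eq h hc.le,
    sqrt_re_inner_self_eq_of_inner_eq h hc.le, mul_mul_mul_comm, Real.mul_self_sqrt hc.le,
    mul_div_mul_left _ _ hc.ne']

lemma re_inner_self_eq_sq_mul_of_sqrt_eq {c : ℝ}
    (h : ∀ x, √(re (q.inner x x)) = c * √(re (p.inner x x))) (x : V) :
    re (q.inner x x) = c ^ 2 * re (p.inner x x) := by
  rw [← Real.sq_sqrt (q.re_inner_nonneg x), h, mul_pow, Real.sq_sqrt (p.re_inner_nonneg x)]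

lemma inner_eq_ofReal_mul_of_re_inner_eq {c : ℝ}
    (h : ∀ x y, re (q.inner x y) = c * re (p.inner x y)) (x y : V) :
    q.inner x y = c * p.inner x y := by
  refine RCLike.ext ?_ ?_
  · rw [h, re_ofReal_mul]
  · have hI := h x ((I : 𝕜) • y)
    rw [re_inner_smul_I_right, re_inner_smul_I_right] at hI
    rw [im_ofReal_mul]
    linarith

lemma inner_eq_ofReal_mul_of_re_inner_self_eq {c : ℝ}
    (h : ∀ x, re (q.inner x x) = c * re (p.inner x x)) (x y : V) :
    q.inner x y = c * p.inner x y := by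
  refine inner_eq_ofReal_mul_of_re_inner_eq (fun x y ↦ ?_) x y
  rw [re_inner_eq_polarization, re_inner_eq_polarization p, h, h, h]
  ring

lemma re_inner_eq_zero_iff_of_cosAngle_eq
    (h : ∀ x y, x ≠ 0 → y ≠ 0 → cosAngle p x y = cosAngle q x y) {x y : V} (hx : x ≠ 0)
    (hy : y ≠ 0) : re (p.inner x y) = 0 ↔ re (q.inner x y) = 0 := by
  rw [← cosAngle_eq_zero_iff p hx hy, ← cosAngle_eq_zero_iff q hx hy, h x y hx hy]

lemma inner_eq_zero_iff_of_re_inner_eq_zero_iff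
    (h : ∀ x y, x ≠ 0 → y ≠ 0 → (re (p.inner x y) = 0 ↔ re (q.inner x y) = 0)) (x y : V) :
    p.inner x y = 0 ↔ q.inner x y = 0 := by
  have hre : ∀ x y, re (p.inner x y) = 0 ↔ re (q.inner x y) = 0 := by
    intro x y
    rcases eq_or_ne x 0 with rfl | hx
    · simp only [inner_zero_left (c := p.toCore), inner_zero_left (c := q.toCore)]
    rcases eq_or_ne y 0 with rfl | hy
    · simp only [inner_zero_right (c := p.toCore), inner_zero_right (c := q.toCore)]
    exact h x y hx hy
  rw [inner_eq_zero_iff_re_inner_eq_zero, inner_eq_zero_iff_re_inner_eq_zero, hre, hre]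

variable (p q) in
noncomputable def normSqRatio (x : V) : ℝ := re (q.inner x x) / re (p.inner x x)

lemma normSqRatio_pos {x : V} (hx : x ≠ 0) : 0 < normSqRatio p q x :=
  div_pos (re_inner_self_pos q hx) (re_inner_self_pos p hx)

lemma inner_eq_normSqRatio_mul (h : ∀ x y, p.inner x y = 0 → q.inner x y = 0) {x : V}
    (hx : x ≠ 0) (y : V) : q.inner x y = normSqRatio p q x * p.inner x y := by
  have hpx : p.inner x x ≠ 0 := fun h0 ↦ hx (p.definite x h0)
  have hp : p.inner x (y - (p.inner x y / p.inner x x) • x) = 0 := by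
    rw [inner_sub_right (c := p.toCore), inner_smul_right (c := p.toCore),
      div_mul_cancel₀ _ hpx, sub_self]
  have hq := h x _ hp
  rw [inner_sub_right (c := q.toCore), inner_smul_right (c := q.toCore), sub_eq_zero] at hq
  rw [hq, normSqRatio, ofReal_div, inner_self_ofReal_re (c := p.toCore),
    inner_self_ofReal_re (c := q.toCore)]
  field_simp

lemma normSqRatio_eq_of_inner_ne_zero (h : ∀ x y, p.inner x y = 0 → q.inner x y = 0)
    {x y : V} (hxy : p.inner x y ≠ 0) : normSqRatio p q x = normSqRatio p q y := by
  have hx : x ≠ 0 := by rintro rfl; exact hxy (inner_zero_left (c := p.toCore) y)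
  have hy : y ≠ 0 := by rintro rfl; exact hxy (inner_zero_right (c := p.toCore) x)
  have hyx := congrArg conj (inner_eq_normSqRatio_mul h hy x)
  rw [inner_conj_symm (c := q.toCore), map_mul, conj_ofReal, inner_conj_symm (c := p.toCore),
    inner_eq_normSqRatio_mul h hx y] at hyx
  exact_mod_cast mul_right_cancel₀ hxy hyx

lemma normSqRatio_eq (h : ∀ x y, p.inner x y = 0 → q.inner x y = 0) {x y : V} (hx : x ≠ 0)
    (hy : y ≠ 0) : normSqRatio p q x = normSqRatio p q y := by
  by_cases hxy : p.inner x y = 0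
  · -- `x + y` is orthogonal to neither `x` nor `y`
    have hyx : p.inner y x = 0 := by rw [← inner_conj_symm (c := p.toCore), hxy, map_zero]
    rw [normSqRatio_eq_of_inner_ne_zero h (y := x + y),
      normSqRatio_eq_of_inner_ne_zero h (x := y)]
    · rw [inner_add_right (c := p.toCore), hyx, zero_add]
      exact fun h0 ↦ hy (p.definite y h0)
    · rw [inner_add_right (c := p.toCore), hxy, add_zero]
      exact fun h0 ↦ hx (p.definite x h0)
  · exact normSqRatio_eq_of_inner_ne_zero h hxy

theorem exists_pos_inner_eq_ofReal_mul_of_orthogonal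
    (h : ∀ x y, p.inner x y = 0 → q.inner x y = 0) :
    ∃ c : ℝ, 0 < c ∧ ∀ x y, q.inner x y = c * p.inner x y := by
  rcases subsingleton_or_nontrivial V with hV | hV
  · exact ⟨1, one_pos, fun x y ↦ by rw [Subsingleton.elim x 0, inner_zero_left (c := p.toCore),
      inner_zero_left (c := q.toCore), mul_zero]⟩
  obtain ⟨x₀, hx₀⟩ := exists_ne (0 : V)
  refine ⟨normSqRatio p q x₀, normSqRatio_pos hx₀, fun x y ↦ ?_⟩
  rcases eq_or_ne x 0 with rfl | hx
  · rw [inner_zero_left (c := p.toCore), inner_zero_left (c := q.toCore), mul_zero]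
  · rw [inner_eq_normSqRatio_mul h hx, normSqRatio_eq h hx hx₀]

end Pair

end InnerProductSpace.Core

open InnerProductSpace.Core

/-- For two complex inner products on a vector space `V`, the following are equivalent:
(1) they are conformal; (2) the induced norms are proportional; (3) they define the same
(Euclidean) angles for all pairs of nonzero vectors; (4) they define the same `π/2` angle;
(5) they define the same orthogonality relations. -/
theorem stmt_18 {V : Type*} [AddCommGroup V] [Module ℂ V]
    (p₁ p₂ : InnerProductSpace.Core ℂ V) :
    [∃ c : ℝ, 0 < c ∧ ∀ x y : V, p₂.inner x y = (c : ℂ) * p₁.inner x y,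
     ∃ c : ℝ, 0 < c ∧ ∀ x : V,
       Real.sqrt (p₂.inner x x).re = c * Real.sqrt (p₁.inner x x).re,
     ∀ x y : V, x ≠ 0 → y ≠ 0 →
       (p₁.inner x y).re / (Real.sqrt (p₁.inner x x).re * Real.sqrt (p₁.inner y y).re) =
       (p₂.inner x y).re / (Real.sqrt (p₂.inner x x).re * Real.sqrt (p₂.inner y y).re),
     ∀ x y : V, x ≠ 0 → y ≠ 0 → ((p₁.inner x y).re = 0 ↔ (p₂.inner x y).re = 0),
     ∀ x y : V, p₁.inner x y = 0 ↔ p₂.inner x y = 0].TFAE := by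
  tfae_have 1 → 2
  | ⟨c, hc, h⟩ => ⟨√c, Real.sqrt_pos.2 hc, sqrt_re_inner_self_eq_of_inner_eq h hc.le⟩
  tfae_have 2 → 1
  | ⟨c, hc, h⟩ => ⟨c ^ 2, by positivity,
      inner_eq_ofReal_mul_of_re_inner_self_eq (re_inner_self_eq_sq_mul_of_sqrt_eq h)⟩
  tfae_have 1 → 3
  | ⟨c, hc, h⟩, x, y, _, _ => (cosAngle_eq_of_inner_eq h hc x y).symm
  tfae_have 3 → 4 := re_inner_eq_zero_iff_of_cosAngle_eq (p := p₁) (q := p₂)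
  tfae_have 4 → 5 := inner_eq_zero_iff_of_re_inner_eq_zero_iff (p := p₁) (q := p₂)
  tfae_have 5 → 1 := fun h ↦ exists_pos_inner_eq_ofReal_mul_of_orthogonal fun x y ↦ (h x y).1
  tfae_finish
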